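/- Upper bound on the effective Hamiltonian (power case): if (u, m, H̄) is a classical solution of the power-type ergodic MFG system, then H̄ ≤ |P|²/2 − α^q. (The proof uses that v ≥ 0 and Jensen's inequality ∫_Q m^{q+1} dy ≥ (∫_Q m dy)^{q+1} = 1.) -/

import Mathlib

/-!
Multiply the Hamilton–Jacobi equation by `m` and integrate over the cube. Testing the
Fokker–Planck equation against `u` (the divergence theorem for a periodic vector field) gives
`∫ m (-Δu + ∇u · (∇u + P)) = 0`. Since `½|∇u + P|² ≤ ∇u · (∇u + P) + ½|P|²` and `v ≥ 0`, this
leaves `H - ½|P|² + αᑫ ∫ m^(q+1) ≤ 0`, and Jensen's inequality gives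
`∫ m^(q+1) ≥ (∫ m)^(q+1) = 1`.
-/

open MeasureTheory Real

/-- Partial derivative in direction `i`. -/
noncomputable def pd {n : ℕ} (i : Fin n) (f : (Fin n → ℝ) → ℝ) (x : Fin n → ℝ) : ℝ :=
  fderiv ℝ f x (Pi.single i 1)

/-- Laplacian: sum of second partial derivatives. -/
noncomputable def lap {n : ℕ} (f : (Fin n → ℝ) → ℝ) (x : Fin n → ℝ) : ℝ :=
  ∑ i, pd i (pd i f) x

/-- Divergence of a vector field. -/
noncomputable def dvg {n : ℕ} (F : (Fin n → ℝ) → Fin n → ℝ) (x : Fin n → ℝ) : ℝ :=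
  ∑ i, pd i (fun y => F y i) x

/-- `ℤⁿ`-periodicity. -/
def ZPeriodic {n : ℕ} (f : (Fin n → ℝ) → ℝ) : Prop :=
  ∀ (k : Fin n → ℤ) (x : Fin n → ℝ), f (x + fun i => (k i : ℝ)) = f x

/-- The unit cube `Q = [0,1]ⁿ`. -/
def unitCube (n : ℕ) : Set (Fin n → ℝ) := Set.Icc 0 1

/-- A classical solution `(u, m, H)` of the power-type ergodic MFG system
`-Δu + ½|∇u+P|² - v - αᑫ mᑫ = H`, `-Δm - div(m(∇u+P)) = 0`, `∫ u = 0`, `∫ m = 1`. -/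
structure PowerMFG {n : ℕ} (v : (Fin n → ℝ) → ℝ) (P : Fin n → ℝ) (α q : ℝ)
    (u m : (Fin n → ℝ) → ℝ) (H : ℝ) : Prop where
  hu : ContDiff ℝ 2 u
  hm : ContDiff ℝ 2 m
  hup : ZPeriodic u
  hmp : ZPeriodic m
  hmpos : ∀ x, 0 < m x
  hHJB : ∀ x, -lap u x + (∑ i, (pd i u x + P i) ^ 2) / 2 - v x - α ^ q * (m x) ^ q = H
  hFP : ∀ x, -lap m x - dvg (fun y j => m y * (pd j u y + P j)) x = 0
  humean : (∫ y in unitCube n, u y) = 0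
  hmmean : (∫ y in unitCube n, m y) = 1

section PartialDerivatives

variable {n : ℕ} {f g : (Fin n → ℝ) → ℝ} {x : Fin n → ℝ} {i : Fin n}

theorem pd_add (hf : DifferentiableAt ℝ f x) (hg : DifferentiableAt ℝ g x) :
    pd i (fun y => f y + g y) x = pd i f x + pd i g x := by
  simp only [pd, fderiv_fun_add hf hg, add_apply]

theorem pd_sub (hf : DifferentiableAt ℝ f x) (hg : DifferentiableAt ℝ g x) :
    pd i (fun y => f y - g y) x = pd i f x - pd i g x := by
  simp only [pd, fderiv_fun_sub hf hg, sub_apply]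

theorem pd_mul (hf : DifferentiableAt ℝ f x) (hg : DifferentiableAt ℝ g x) :
    pd i (fun y => f y * g y) x = pd i f x * g x + f x * pd i g x := by
  simp only [pd, fderiv_fun_mul hf hg, add_apply, smul_apply, smul_eq_mul]
  ring

theorem ContDiff.pd {k l : WithTop ℕ∞} (hf : ContDiff ℝ l f) (hkl : k + 1 ≤ l) (i : Fin n) :
    ContDiff ℝ k (pd i f) :=
  (hf.fderiv_right hkl).clm_apply contDiff_const

theorem ContDiff.continuous_lap (hf : ContDiff ℝ 2 f) : Continuous (lap f) :=
  continuous_finsetSum _ fun i _ =>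
    ((hf.pd (k := 1) (by norm_num) i).pd (k := 0) (by norm_num) i).continuous

theorem ZPeriodic.pd (hf : ZPeriodic f) (i : Fin n) : ZPeriodic (pd i f) := by
  intro k x
  simp only [_root_.pd, ← fderiv_comp_add_right, hf k]

theorem ZPeriodic.add_single (hf : ZPeriodic f) (x : Fin n → ℝ) (i : Fin n) :
    f (x + Pi.single i 1) = f x := by
  convert hf (Pi.single i 1) x using 3
  ext j
  by_cases hj : j = i <;> simp [hj]

end PartialDerivatives

theorem Continuous.integrableOn_unitCube {n : ℕ} {f : (Fin n → ℝ) → ℝ} (hf : Continuous f) :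
    IntegrableOn f (unitCube n) :=
  hf.integrableOn_Icc

instance isProbabilityMeasure_restrict_unitCube {n : ℕ} :
    IsProbabilityMeasure (volume.restrict (unitCube n)) :=
  ⟨by simp [unitCube, Real.volume_Icc_pi]⟩

theorem integral_unitCube_sum_pd_eq_zero {n : ℕ} (F : Fin n → (Fin n → ℝ) → ℝ)
    (hF : ∀ i, ContDiff ℝ 1 (F i)) (hFp : ∀ i, ZPeriodic (F i)) :
    ∫ x in unitCube n, ∑ i, pd i (F i) x = 0 := by
  cases n with
  | zero => simp
  | succ n =>
    simp only [pd, unitCube]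
    rw [integral_divergence_of_hasFDerivAt_off_countable' 0 1 zero_le_one F
      (fun i x => fderiv ℝ (F i) x) ∅ Set.countable_empty
      (fun i => (hF i).continuous.continuousOn)
      (fun x _ i => ((hF i).differentiable one_ne_zero x).hasFDerivAt)
      (Continuous.integrableOn_Icc <| continuous_finsetSum _ fun i _ =>
        ((hF i).continuous_fderiv one_ne_zero).clm_apply continuous_const)]
    refine Finset.sum_eq_zero fun i _ => ?_
    have hface (y : Fin n → ℝ) :
        Fin.insertNth (α := fun _ => ℝ) i 1 y = Fin.insertNth i 0 y + Pi.single i 1 :=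
      eq_add_of_sub_eq' (by simp)
    simp only [Pi.one_apply, Pi.zero_apply, hface, (hFp i).add_single, sub_self]

theorem one_le_integral_rpow_of_integral_eq_one {Ω : Type*} [MeasurableSpace Ω] {μ : Measure Ω}
    [IsProbabilityMeasure μ] {f : Ω → ℝ} {p : ℝ} (hp : 1 ≤ p) (hf0 : ∀ᵐ x ∂μ, 0 ≤ f x)
    (hf : Integrable f μ) (hfp : Integrable (fun x => f x ^ p) μ) (hf1 : ∫ x, f x ∂μ = 1) :
    1 ≤ ∫ x, f x ^ p ∂μ := by
  have := (convexOn_rpow hp).map_integral_le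
    (fun t _ => (continuousAt_rpow_const t p (Or.inr (by linarith))).continuousWithinAt)
    isClosed_Ici hf0 hf hfp
  rwa [hf1, one_rpow] at this

theorem sum_add_sq_div_two_le {ι : Type*} (s : Finset ι) (a b : ι → ℝ) :
    (∑ i ∈ s, (a i + b i) ^ 2) / 2 ≤ ∑ i ∈ s, a i * (a i + b i) + (∑ i ∈ s, b i ^ 2) / 2 := by
  calc (∑ i ∈ s, (a i + b i) ^ 2) / 2
      ≤ (∑ i ∈ s, (2 * (a i * (a i + b i)) + b i ^ 2)) / 2 := by
        gcongr with i; nlinarith [sq_nonneg (a i)]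
    _ = _ := by rw [Finset.sum_add_distrib, ← Finset.mul_sum]; ring

/-- `u` times the Fokker–Planck flux `∇m + m (∇u + P)`, minus `m ∇u`: integrating its divergence
over the cube is the integration by parts that tests the Fokker–Planck equation against `u`. -/
noncomputable def dualityFlux {n : ℕ} (P : Fin n → ℝ) (u m : (Fin n → ℝ) → ℝ) (i : Fin n)
    (y : Fin n → ℝ) : ℝ :=
  u y * (pd i m y + m y * (pd i u y + P i)) - m y * pd i u y

section DualityFlux

variable {n : ℕ} {P : Fin n → ℝ} {u m : (Fin n → ℝ) → ℝ}

theorem contDiff_dualityFlux (hu : ContDiff ℝ 2 u) (hm : ContDiff ℝ 2 m) (i : Fin n) :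
    ContDiff ℝ 1 (dualityFlux P u m i) := by
  have hu1 : ContDiff ℝ 1 u := hu.of_le (by norm_num)
  have hm1 : ContDiff ℝ 1 m := hm.of_le (by norm_num)
  have hdu := hu.pd (k := 1) (by norm_num) i
  have hdm := hm.pd (k := 1) (by norm_num) i
  unfold dualityFlux
  fun_prop

theorem ZPeriodic.dualityFlux (hup : ZPeriodic u) (hmp : ZPeriodic m) (i : Fin n) :
    ZPeriodic (dualityFlux P u m i) := by
  intro k x
  simp only [_root_.dualityFlux, hup k x, hmp k x, hup.pd i k x, hmp.pd i k x]

theorem sum_pd_dualityFlux (hu : ContDiff ℝ 2 u) (hm : ContDiff ℝ 2 m) (x : Fin n → ℝ) :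
    ∑ i, pd i (dualityFlux P u m i) x =
      m x * (∑ i, pd i u x * (pd i u x + P i) - lap u x)
        + u x * (lap m x + dvg (fun y j => m y * (pd j u y + P j)) x) := by
  have hud : Differentiable ℝ u := hu.differentiable (by norm_num)
  have hmd : Differentiable ℝ m := hm.differentiable (by norm_num)
  have hterm (i : Fin n) : pd i (dualityFlux P u m i) x =
      m x * (pd i u x * (pd i u x + P i) - pd i (pd i u) x)
        + u x * (pd i (pd i m) x + pd i (fun y => m y * (pd i u y + P i)) x) := by
    have hdu := (hu.pd (k := 1) (by norm_num) i).differentiable one_ne_zero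
    have hdm := (hm.pd (k := 1) (by norm_num) i).differentiable one_ne_zero
    have hflux : Differentiable ℝ fun y => m y * (pd i u y + P i) := by fun_prop
    unfold dualityFlux
    rw [pd_sub (by fun_prop) (by fun_prop), pd_mul (hud x) (by fun_prop),
      pd_mul (hmd x) (hdu x), pd_add (hdm x) (hflux x)]
    ring
  simp only [hterm, lap, dvg, Finset.sum_add_distrib, Finset.sum_sub_distrib, Finset.mul_sum,
    mul_add, mul_sub]

end DualityFlux

theorem integral_unitCube_mul_sub_lap_eq_zero {n : ℕ} {P : Fin n → ℝ} {u m : (Fin n → ℝ) → ℝ}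
    (hu : ContDiff ℝ 2 u) (hm : ContDiff ℝ 2 m) (hup : ZPeriodic u) (hmp : ZPeriodic m)
    (hFP : ∀ x, -lap m x - dvg (fun y j => m y * (pd j u y + P j)) x = 0) :
    ∫ x in unitCube n, m x * (∑ i, pd i u x * (pd i u x + P i) - lap u x) = 0 := by
  rw [← integral_unitCube_sum_pd_eq_zero (dualityFlux P u m) (contDiff_dualityFlux hu hm)
    (hup.dualityFlux hmp)]
  congr 1 with x
  rw [sum_pd_dualityFlux hu hm, show lap m x + _ = 0 by linarith [hFP x], mul_zero, add_zero]

theorem PowerMFG.mul_sub_add_rpow_le {n : ℕ} {v : (Fin n → ℝ) → ℝ} {P : Fin n → ℝ} {α q : ℝ}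
    {u m : (Fin n → ℝ) → ℝ} {H : ℝ} (h : PowerMFG v P α q u m H) (hv0 : ∀ x, 0 ≤ v x)
    (x : Fin n → ℝ) :
    m x * (H - (∑ i, P i ^ 2) / 2) + α ^ q * m x ^ (q + 1) ≤
      m x * (∑ i, pd i u x * (pd i u x + P i) - lap u x) := by
  have hH : H - (∑ i, P i ^ 2) / 2 + α ^ q * m x ^ q ≤
      ∑ i, pd i u x * (pd i u x + P i) - lap u x := by
    linarith [h.hHJB x, hv0 x, sum_add_sq_div_two_le Finset.univ (fun i => pd i u x) P]
  rw [rpow_add_one (h.hmpos x).ne']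
  nlinarith [h.hmpos x]

theorem power_mfg_H_upper_bound_general {n : ℕ}
    (v : (Fin n → ℝ) → ℝ) (hv0 : ∀ x, 0 ≤ v x)
    (P : Fin n → ℝ) (α q : ℝ) (hα : 0 ≤ α) (hq : 0 < q)
    (u m : (Fin n → ℝ) → ℝ) (H : ℝ)
    (h : PowerMFG v P α q u m H) :
    H ≤ (∑ i, (P i) ^ 2) / 2 - α ^ q := by
  have hmc : Continuous m := h.hm.continuous
  have hmpc : Continuous fun x => m x ^ (q + 1) :=
    hmc.rpow_const fun _ => Or.inr (by linarith)
  have hJensen : 1 ≤ ∫ x in unitCube n, m x ^ (q + 1) :=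
    one_le_integral_rpow_of_integral_eq_one (by linarith)
      (ae_of_all _ fun x => (h.hmpos x).le) hmc.integrableOn_unitCube
      hmpc.integrableOn_unitCube h.hmmean
  have hdrift : Continuous fun x => m x * (∑ i, pd i u x * (pd i u x + P i) - lap u x) := by
    have hdu (i : Fin n) : Continuous (pd i u) := (h.hu.pd (k := 1) (by norm_num) i).continuous
    have := h.hu.continuous_lap
    fun_prop
  have hlin : Continuous fun x => m x * (H - (∑ i, P i ^ 2) / 2) := by fun_prop
  have hpow : Continuous fun x => α ^ q * m x ^ (q + 1) := continuous_const.mul hmpc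
  have hintegrated : H - (∑ i, P i ^ 2) / 2 + α ^ q * ∫ x in unitCube n, m x ^ (q + 1) ≤ 0 :=
    calc H - (∑ i, P i ^ 2) / 2 + α ^ q * ∫ x in unitCube n, m x ^ (q + 1)
        = ∫ x in unitCube n, m x * (H - (∑ i, P i ^ 2) / 2) + α ^ q * m x ^ (q + 1) := by
          rw [integral_add hlin.integrableOn_unitCube hpow.integrableOn_unitCube,
            integral_mul_const, integral_const_mul, h.hmmean, one_mul]
      _ ≤ ∫ x in unitCube n, m x * (∑ i, pd i u x * (pd i u x + P i) - lap u x) :=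
          integral_mono (hlin.add hpow).integrableOn_unitCube hdrift.integrableOn_unitCube
            (h.mul_sub_add_rpow_le hv0)
      _ = 0 := integral_unitCube_mul_sub_lap_eq_zero h.hu h.hm h.hup h.hmp h.hFP
  nlinarith [rpow_nonneg hα q]

/-- Upper bound on the effective Hamiltonian (power case). -/
theorem power_mfg_H_upper_bound {n : ℕ} (hn : 1 ≤ n)
    (v : (Fin n → ℝ) → ℝ) (hv0 : ∀ x, 0 ≤ v x) (hvlip : ∃ K, LipschitzWith K v) (hvper : ZPeriodic v)
    (P : Fin n → ℝ) (α q : ℝ) (hα : 0 ≤ α) (hq : 0 < q)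
    (u m : (Fin n → ℝ) → ℝ) (H : ℝ)
    (h : PowerMFG v P α q u m H) :
    H ≤ (∑ i, (P i) ^ 2) / 2 - α ^ q :=
  power_mfg_H_upper_bound_general v hv0 P α q hα hq u m H h
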